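/- arXiv:2403.16181 — 2 statements merged into one kernel-verified Lean document; each statement's English description precedes it below -/
import Mathlib

section
/- If M ≤_{1+2·α} N in the standard asymmetric back-and-forth relations, then M ≡ᵇᶠ_α N in the standard symmetric back-and-forth relations. -/
open FirstOrder

/-- Two tuples have the same quantifier-free type. -/
def QFEquiv (L : FirstOrder.Language) (M N : Type*) [L.Structure M] [L.Structure N]
    {n : ℕ} (a : Fin n → M) (b : Fin n → N) : Prop :=
  ∀ φ : L.Formula (Fin n), φ.IsQF → (φ.Realize a ↔ φ.Realize b)

/-- The standard symmetric back-and-forth relation of rank `α`. -/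
def BF (L : FirstOrder.Language) (M N : Type*) [L.Structure M] [L.Structure N]
    (α : Ordinal) (n : ℕ) (a : Fin n → M) (b : Fin n → N) : Prop :=
  (α = 0 ∧ QFEquiv L M N a b) ∨
  (α ≠ 0 ∧
    (∀ β < α, ∀ (m : ℕ) (c : Fin m → M), ∃ d : Fin m → N,
      BF L M N β (n + m) (Fin.append a c) (Fin.append b d)) ∧
    (∀ β < α, ∀ (m : ℕ) (d : Fin m → N), ∃ c : Fin m → M,
      BF L M N β (n + m) (Fin.append a c) (Fin.append b d)))
termination_by α

/-- The existential type of `b` in `N` is contained in the existential type of `a` in `M`: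
every existential formula (existential quantifiers applied to a quantifier-free formula)
true of `b` in `N` is true of `a` in `M`. -/
def ExTypeLe (L : FirstOrder.Language) (M N : Type*) [L.Structure M] [L.Structure N]
    {n : ℕ} (a : Fin n → M) (b : Fin n → N) : Prop :=
  ∀ (m : ℕ) (φ : L.BoundedFormula (Fin n) m), φ.IsQF →
    (φ.exs.Realize b → φ.exs.Realize a)

/-- The standard asymmetric back-and-forth relation `(M,a) ≤_α (N,b)` (for `α ≥ 1`). -/
def ALE (L : FirstOrder.Language) (M N : Type u) [L.Structure M] [L.Structure N]
    (α : Ordinal) (n : ℕ) (a : Fin n → M) (b : Fin n → N) : Prop :=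
  (α ≤ 1 ∧ ExTypeLe L M N a b) ∨
  (1 < α ∧
    ∀ β, 1 ≤ β → β < α → ∀ (m : ℕ) (d : Fin m → N), ∃ c : Fin m → M,
      ALE L N M β (n + m) (Fin.append b d) (Fin.append a c))
termination_by α

/-!
Induction on `α`, for all pairs of tuples at once. At rank `0`, `1 + 2·0 = 1` and `≤_1` is
inclusion of existential types, which already forces equal quantifier-free types because
those are closed under negation. At a positive rank, a move of the back direction costs one
round of the asymmetric game, while a move forth costs two: an empty first round swaps the
roles of `M` and `N`, after which the opponent's tuple can be answered. Both land at rank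
`1 + 2·β` for `β < α`, where the induction hypothesis (and symmetry of `≡ᵇᶠ`) applies.
-/

theorem Fin.append_nil {α : Type*} {n : ℕ} (u : Fin n → α) (v : Fin 0 → α) :
    Fin.append u v = u := by
  rw [Fin.append_right_nil u v rfl]
  rfl

section BackAndForth

variable {L : Language}

theorem ExTypeLe.qfEquiv {M N : Type*} [L.Structure M] [L.Structure N] {n : ℕ}
    {a : Fin n → M} {b : Fin n → N} (h : ExTypeLe L M N a b) : QFEquiv L M N a b := by
  intro φ hφ
  refine ⟨fun ha => by_contra fun hb => ?_, h 0 φ hφ⟩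
  exact h 0 φ.not hφ.not hb ha

theorem BF.symm {M N : Type*} [L.Structure M] [L.Structure N] {α : Ordinal} {n : ℕ}
    {a : Fin n → M} {b : Fin n → N} (h : BF L M N α n a b) : BF L N M α n b a := by
  induction α using WellFoundedLT.induction generalizing n a b with
  | _ α IH =>
    rw [BF] at h ⊢
    rcases h with ⟨hα, hqf⟩ | ⟨hα, hforth, hback⟩
    · exact Or.inl ⟨hα, fun φ hφ => (hqf φ hφ).symm⟩
    · refine Or.inr ⟨hα, fun β hβ m d => ?_, fun β hβ m c => ?_⟩
      · obtain ⟨c, hc⟩ := hback β hβ m d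
        exact ⟨c, IH β hβ hc⟩
      · obtain ⟨d, hd⟩ := hforth β hβ m c
        exact ⟨d, IH β hβ hd⟩

section ALE

variable {M N : Type u} [L.Structure M] [L.Structure N] {α β : Ordinal} {n : ℕ}
  {a : Fin n → M} {b : Fin n → N}

theorem ALE.exTypeLe (h : ALE L M N α n a b) (hα : α ≤ 1) : ExTypeLe L M N a b := by
  rw [ALE] at h
  rcases h with ⟨-, h⟩ | ⟨h1α, -⟩
  · exact h
  · exact absurd hα h1α.not_ge

theorem ALE.back (h : ALE L M N α n a b) (hβ : 1 ≤ β) (hβα : β < α) (m : ℕ) (d : Fin m → N) :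
    ∃ c : Fin m → M, ALE L N M β (n + m) (Fin.append b d) (Fin.append a c) := by
  rw [ALE] at h
  rcases h with ⟨hα, -⟩ | ⟨-, h⟩
  · exact absurd (hβ.trans_lt hβα) hα.not_gt
  · exact h β hβ hβα m d

theorem ALE.swap (h : ALE L M N α n a b) (hβ : 1 ≤ β) (hβα : β < α) : ALE L N M β n b a := by
  obtain ⟨c, hc⟩ := h.back hβ hβα 0 Fin.elim0
  rwa [Fin.append_nil, Fin.append_nil] at hc

theorem ALE.forth (h : ALE L M N α n a b) (hβ : 1 ≤ β) (hβα : β + 1 < α) (m : ℕ)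
    (c : Fin m → M) : ∃ d : Fin m → N, ALE L M N β (n + m) (Fin.append a c) (Fin.append b d) :=
  (h.swap (hβ.trans le_self_add) hβα).back hβ (lt_add_one β) m c

end ALE

theorem one_add_two_mul_add_one_lt {α β : Ordinal} (h : β < α) : 1 + 2 * β + 1 < 1 + 2 * α :=
  calc 1 + 2 * β + 1 < 1 + 2 * β + 1 + 1 := lt_add_one _
    _ = 1 + 2 * (β + 1) := by rw [mul_add_one, ← one_add_one_eq_two, add_assoc, add_assoc]
    _ ≤ 1 + 2 * α := by gcongr; exact Order.add_one_le_of_lt h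

theorem BF.of_ALE {M N : Type u} [L.Structure M] [L.Structure N] {α : Ordinal} {n : ℕ}
    {a : Fin n → M} {b : Fin n → N} (h : ALE L M N (1 + 2 * α) n a b) : BF L M N α n a b := by
  induction α using WellFoundedLT.induction generalizing M N n a b with
  | _ α IH =>
    rw [BF]
    rcases eq_or_ne α 0 with rfl | hα
    · rw [mul_zero, add_zero] at h
      exact Or.inl ⟨rfl, (h.exTypeLe le_rfl).qfEquiv⟩
    refine Or.inr ⟨hα, fun β hβ m c => ?_, fun β hβ m d => ?_⟩
    · obtain ⟨d, hd⟩ := h.forth le_self_add (one_add_two_mul_add_one_lt hβ) m c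
      exact ⟨d, IH β hβ hd⟩
    · obtain ⟨c, hc⟩ := h.back (β := 1 + 2 * β) le_self_add (by gcongr) m d
      exact ⟨c, (IH β hβ hc).symm⟩

end BackAndForth

/-- If `M ≤_{1+2·α} N` in the asymmetric back-and-forth relations, then `M ≡ᵇᶠ_α N`
in the symmetric back-and-forth relations. -/
theorem ale_implies_bf {L : FirstOrder.Language} {M N : Type u}
    [L.Structure M] [L.Structure N] {α : Ordinal}
    (h : ALE L M N (1 + 2 * α) 0 (fun i => i.elim0) (fun i => i.elim0)) :
    BF L M N α 0 (fun i => i.elim0) (fun i => i.elim0) :=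
  .of_ALE h
end

section
/- If G is an existentially closed group and G ≡ᵇᶠ_2 H, then H is existentially closed. -/
/-- Tuples `g` and `h` satisfy the same group-word equations (equal quantifier-free types). -/
def WordEq {ι : Type*} (G H : Type*) [Group G] [Group H]
    (g : ι → G) (h : ι → H) : Prop :=
  ∀ w : FreeGroup ι, FreeGroup.lift g w = 1 ↔ FreeGroup.lift h w = 1

/-- The standard symmetric back-and-forth relation of rank `α` between groups with
distinguished tuples. -/
def GBF (G H : Type*) [Group G] [Group H]
    (α : Ordinal) (n : ℕ) (g : Fin n → G) (h : Fin n → H) : Prop :=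
  (α = 0 ∧ WordEq G H g h) ∨
  (α ≠ 0 ∧
    (∀ β < α, ∀ (m : ℕ) (c : Fin m → G), ∃ d : Fin m → H,
      GBF G H β (n + m) (Fin.append g c) (Fin.append h d)) ∧
    (∀ β < α, ∀ (m : ℕ) (d : Fin m → H), ∃ c : Fin m → G,
      GBF G H β (n + m) (Fin.append g c) (Fin.append h d)))
termination_by α

/-- A group `G` is existentially closed: any finite system of equations and inequations
with parameters from `G` that has a solution in some group extending `G` already has a
solution in `G`. -/
def IsECGroup (G : Type u) [Group G] : Prop :=
  ∀ (K : Type u) (_ : Group K) (f : G →* K), Function.Injective f →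
    ∀ (n m : ℕ) (par : Fin n → G) (E I : Finset (FreeGroup (Fin n ⊕ Fin m))),
      (∃ x : Fin m → K,
        (∀ w ∈ E, FreeGroup.lift (Sum.elim (f ∘ par) x) w = 1) ∧
        (∀ w ∈ I, FreeGroup.lift (Sum.elim (f ∘ par) x) w ≠ 1)) →
      (∃ x : Fin m → G,
        (∀ w ∈ E, FreeGroup.lift (Sum.elim par x) w = 1) ∧
        (∀ w ∈ I, FreeGroup.lift (Sum.elim par x) w ≠ 1))

/-!
Given parameters `p` in `H` and a system over `p` solvable in some `K ≥ H`, the back step of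
`G ≡ᵇᶠ₂ H` yields `c` in `G` with `(G, c) ≡ᵇᶠ₁ (H, p)`; in particular `c` and `p` generate
isomorphic marked subgroups. Amalgamating `G` with the subgroup of `K` generated by `p` and the
solution over this common subgroup gives an extension of `G` in which the system over `c` is
solvable, hence it is solvable in `G` by some `y`. The forth step of `≡ᵇᶠ₁` transports `y` to
`d` in `H` with `(c, y)` and `(p, d)` satisfying the same equations, so `d` solves the system.
-/

theorem FreeGroup.lift_map {α β G : Type*} [Group G] (ρ : α → β) (g : β → G)
    (w : FreeGroup α) : FreeGroup.lift g (FreeGroup.map ρ w) = FreeGroup.lift (g ∘ ρ) w := by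
  induction w using FreeGroup.induction_on <;> simp_all

theorem FreeGroup.lift_comp {α G K : Type*} [Group G] [Group K] (f : G →* K) (g : α → G)
    (w : FreeGroup α) : FreeGroup.lift (f ∘ g) w = f (FreeGroup.lift g w) := by
  induction w using FreeGroup.induction_on <;> simp_all

theorem Fin.append_comp_natAdd {α : Type*} {m n : ℕ} (u : Fin m → α) (v : Fin n → α) :
    Fin.append u v ∘ Fin.natAdd m = v :=
  funext (Fin.append_right u v)

namespace WordEq

variable {ι κ G H K : Type*} [Group G] [Group H] [Group K]

theorem trans {g : ι → G} {h : ι → H} {k : ι → K} (hgh : WordEq G H g h)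
    (hhk : WordEq H K h k) : WordEq G K g k :=
  fun w => (hgh w).trans (hhk w)

theorem comp {g : ι → G} {h : ι → H} (hgh : WordEq G H g h) (ρ : κ → ι) :
    WordEq G H (g ∘ ρ) (h ∘ ρ) := fun w => by
  simpa only [FreeGroup.lift_map] using hgh (FreeGroup.map ρ w)

theorem of_injective {f : G →* K} (hf : Function.Injective f) (g : ι → G) :
    WordEq G K g (f ∘ g) := fun w => by
  rw [FreeGroup.lift_comp, map_eq_one_iff f hf]

theorem sumElim_of_append {n m : ℕ} {g : Fin n → G} {c : Fin m → G} {h : Fin n → H}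
    {d : Fin m → H} (hgh : WordEq G H (Fin.append g c) (Fin.append h d)) :
    WordEq G H (Sum.elim g c) (Sum.elim h d) := by
  simpa only [Fin.append_comp_sumElim] using hgh.comp (Sum.elim (Fin.castAdd m) (Fin.natAdd n))

theorem solves_iff {g : ι → G} {h : ι → H} (hgh : WordEq G H g h) (E I : Finset (FreeGroup ι)) :
    ((∀ w ∈ E, FreeGroup.lift g w = 1) ∧ (∀ w ∈ I, FreeGroup.lift g w ≠ 1)) ↔
      ((∀ w ∈ E, FreeGroup.lift h w = 1) ∧ (∀ w ∈ I, FreeGroup.lift h w ≠ 1)) := by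
  simp only [ne_eq, hgh _]

end WordEq

namespace GBF

variable {G H : Type*} [Group G] [Group H] {α β : Ordinal} {n : ℕ} {g : Fin n → G}
  {h : Fin n → H}

theorem forth (hgh : GBF G H α n g h) (hβ : β < α) {m : ℕ} (c : Fin m → G) :
    ∃ d : Fin m → H, GBF G H β (n + m) (Fin.append g c) (Fin.append h d) := by
  rw [GBF] at hgh
  rcases hgh with ⟨rfl, -⟩ | ⟨-, hforth, -⟩
  · exact (not_lt_zero hβ).elim
  · exact hforth β hβ m c

theorem back (hgh : GBF G H α n g h) (hβ : β < α) {m : ℕ} (d : Fin m → H) :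
    ∃ c : Fin m → G, GBF G H β (n + m) (Fin.append g c) (Fin.append h d) := by
  rw [GBF] at hgh
  rcases hgh with ⟨rfl, -⟩ | ⟨-, -, hback⟩
  · exact (not_lt_zero hβ).elim
  · exact hback β hβ m d

theorem wordEq_zero (hgh : GBF G H 0 n g h) : WordEq G H g h := by
  rw [GBF] at hgh
  rcases hgh with ⟨-, hw⟩ | ⟨h0, -⟩
  · exact hw
  · exact absurd rfl h0

theorem wordEq (hgh : GBF G H α n g h) : WordEq G H g h := by
  rcases eq_or_ne α 0 with rfl | hα
  · exact hgh.wordEq_zero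
  obtain ⟨d, hd⟩ := hgh.forth (pos_iff_ne_zero.2 hα) (fun i : Fin 0 => i.elim0)
  simpa only [Sum.elim_comp_inl] using hd.wordEq_zero.sumElim_of_append.comp Sum.inl

end GBF

open Monoid in
theorem exists_amalgam {A : Type w} {G B : Type u} [Group A] [Group G] [Group B]
    {φG : A →* G} {φB : A →* B} (hG : Function.Injective φG) (hB : Function.Injective φB) :
    ∃ (L : Type (max u w)) (_ : Group L) (iG : G →* L) (iB : B →* L),
      Function.Injective iG ∧ Function.Injective iB ∧ iG.comp φG = iB.comp φB := by
  let _ : ∀ b : Bool, Group (cond b G B) := fun b => b.rec ‹Group B› ‹Group G›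
  let φ : ∀ b : Bool, A →* cond b G B := fun b => b.rec φB φG
  have hφ : ∀ b, Function.Injective (φ b) := fun b => b.rec hB hG
  exact ⟨PushoutI φ, inferInstance, PushoutI.of (φ := φ) true, PushoutI.of (φ := φ) false,
    PushoutI.of_injective hφ true, PushoutI.of_injective hφ false,
    (PushoutI.of_comp_eq_base (φ := φ) true).trans (PushoutI.of_comp_eq_base false).symm⟩

theorem exists_amalgam_of_ker_eq {F : Type w} {G B : Type u} [Group F] [Group G] [Group B]
    {ψG : F →* G} {ψB : F →* B} (hker : ψG.ker = ψB.ker) :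
    ∃ (L : Type (max u w)) (_ : Group L) (iG : G →* L) (iB : B →* L),
      Function.Injective iG ∧ Function.Injective iB ∧ iG.comp ψG = iB.comp ψB := by
  obtain ⟨L, _, iG, iB, hiG, hiB, hL⟩ := exists_amalgam (QuotientGroup.kerLift_injective ψG)
    (φB := (QuotientGroup.kerLift ψB).comp (QuotientGroup.quotientMulEquivOfEq hker).toMonoidHom)
    ((QuotientGroup.kerLift_injective ψB).comp (QuotientGroup.quotientMulEquivOfEq hker).injective)
  refine ⟨L, _, iG, iB, hiG, hiB, MonoidHom.ext fun x => ?_⟩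
  simpa using DFunLike.congr_fun hL (x : F ⧸ ψG.ker)

theorem WordEq.exists_extension {ι κ : Type} {G : Type u} {K : Type v} [Group G] [Group K]
    {c : ι → G} {t : ι ⊕ κ → K} (hc : WordEq G K c (t ∘ Sum.inl)) :
    ∃ (L : Type u) (_ : Group L) (iG : G →* L) (X : κ → L),
      Function.Injective iG ∧ WordEq L K (Sum.elim (iG ∘ c) X) t := by
  let π := QuotientGroup.mk' (FreeGroup.lift t).ker
  -- `c` generates a copy of the subgroup of `K` generated by `t ∘ Sum.inl`; the amalgam is taken
  -- over it, with the group generated by `t` lifted to `G`'s universe.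
  let ψB : FreeGroup ι →* ULift.{u} (FreeGroup (ι ⊕ κ) ⧸ (FreeGroup.lift t).ker) :=
    MulEquiv.ulift.symm.toMonoidHom.comp (π.comp (FreeGroup.map Sum.inl))
  have hker : (FreeGroup.lift c).ker = ψB.ker := by
    ext w
    simp [ψB, π, FreeGroup.lift_map, hc w]
  obtain ⟨L, _, iG, iB, hiG, hiB, hL⟩ := exists_amalgam_of_ker_eq hker
  let j := iB.comp (MulEquiv.ulift.symm.toMonoidHom.comp π)
  have hj : FreeGroup.lift (Sum.elim (iG ∘ c) fun k => j (.of (.inr k))) = j := by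
    refine FreeGroup.ext_hom _ _ fun | .inl i => ?_ | .inr k => FreeGroup.lift_apply_of
    simpa [ψB, j] using DFunLike.congr_fun hL (.of i)
  refine ⟨L, _, iG, fun k => j (.of (.inr k)), hiG, fun w => ?_⟩
  rw [hj, MonoidHom.comp_apply, map_eq_one_iff iB hiB]
  simp [π]

/-- If `G` is existentially closed and `G ≡ᵇᶠ_2 H`, then `H` is existentially closed. -/
theorem isECGroup_of_gbf_two {G : Type u} {H : Type v} [Group G] [Group H]
    (hG : IsECGroup G)
    (h2 : GBF G H 2 0 (fun i => i.elim0) (fun i => i.elim0)) :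
    IsECGroup H := by
  intro K _ f hf n m par E I ⟨x, hx⟩
  obtain ⟨c, hc⟩ := h2.back one_lt_two par
  have hcpar : WordEq G H c par := by
    simpa only [Sum.elim_comp_inr] using hc.wordEq.sumElim_of_append.comp Sum.inr
  obtain ⟨L, _, iG, X, hiG, hX⟩ :=
    (hcpar.trans (WordEq.of_injective hf par)).exists_extension (t := Sum.elim (f ∘ par) x)
  obtain ⟨y, hy⟩ := hG L _ iG hiG n m c E I ⟨X, (hX.solves_iff E I).2 hx⟩
  obtain ⟨d, hd⟩ := hc.forth zero_lt_one y
  have hyd : WordEq G H (Sum.elim c y) (Sum.elim par d) := by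
    simpa only [Sum.elim_comp_map, Fin.append_comp_natAdd, Function.comp_id] using
      hd.wordEq.sumElim_of_append.comp (Sum.map (Fin.natAdd 0) id)
  exact ⟨d, (hyd.solves_iff E I).1 hy⟩
end
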